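/- If (C, ℓ_C) and (D, ℓ_D) are orthogonalizable Λ-spaces, then every Λ-linear map A : C → D admits a singular value decomposition. -/

import Mathlib

/-!
Formalization setup following Usher–Zhang, "Persistent homology and Floer–Novikov theory".

We fix an additive subgroup `Γ ≤ ℝ` and abstract the Novikov field `Λ = Λ^{K,Γ}` as a field
`Λ` equipped with a valuation `ν : Λ → ℝ ∪ {∞}` (encoded in `EReal`, with `ν x = ⊤ ↔ x = 0`)
satisfying (V1),(V2),(V3), whose values on nonzero elements lie in (and fill out) `Γ`.

Filtration functions `ℓ : C → ℝ ∪ {-∞}` are encoded as `EReal`-valued functions which never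
take the value `⊤`, with `ℓ x = ⊥ ↔ x = 0`.
-/

noncomputable section

/-- The Novikov field `Λ^{K,Γ}` together with its valuation `ν(Σ a_g T^g) = min {g : a_g ≠ 0}`:
a field `Λ` with a function `ν : Λ → ℝ ∪ {∞}` such that (V1) `ν x = ∞ ↔ x = 0`,
(V2) `ν (xy) = ν x + ν y`, (V3) `ν (x+y) ≥ min (ν x) (ν y)`, and the values of `ν` on
nonzero elements are exactly the elements of `Γ`. -/
structure NovikovStructure (Γ : AddSubgroup ℝ) (Λ : Type*) [Field Λ] where
  ν : Λ → EReal
  ν_eq_top_iff : ∀ x : Λ, ν x = ⊤ ↔ x = 0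
  ν_mul : ∀ x y : Λ, ν (x * y) = ν x + ν y
  min_le_ν_add : ∀ x y : Λ, min (ν x) (ν y) ≤ ν (x + y)
  ν_mem : ∀ x : Λ, x ≠ 0 → ∃ g : Γ, ν x = ((g : ℝ) : EReal)
  ν_surj : ∀ g : Γ, ∃ x : Λ, ν x = ((g : ℝ) : EReal)

/-- `(C, ℓ)` is a non-Archimedean normed vector space over `Λ` (Definition 2.2):
(F1) `ℓ x = -∞ ↔ x = 0`; (F2) `ℓ (λ • x) = ℓ x - ν λ`; (F3) `ℓ (x+y) ≤ max (ℓ x) (ℓ y)`. -/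
structure IsNonArchNorm {Γ : AddSubgroup ℝ} {Λ : Type*} [Field Λ] (NS : NovikovStructure Γ Λ)
    {C : Type*} [AddCommGroup C] [Module Λ C] (ℓ : C → EReal) : Prop where
  eq_bot_iff : ∀ x : C, ℓ x = ⊥ ↔ x = 0
  ne_top : ∀ x : C, ℓ x ≠ ⊤
  smul_eq : ∀ (a : Λ) (x : C), ℓ (a • x) = ℓ x - NS.ν a
  add_le : ∀ x y : C, ℓ (x + y) ≤ max (ℓ x) (ℓ y)

/-- A finite ordered family `(w i)` in `(C, ℓ)` is orthogonal:
`ℓ (∑ λᵢ • wᵢ) = maxᵢ ℓ (λᵢ • wᵢ)` for all coefficients `λᵢ ∈ Λ` (Definition 2.8). -/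
def IsOrthFamily (Λ : Type*) [Field Λ] {C : Type*} [AddCommGroup C] [Module Λ C]
    (ℓ : C → EReal) {ι : Type*} [Fintype ι] (w : ι → C) : Prop :=
  ∀ a : ι → Λ, ℓ (∑ i, a i • w i) = ⨆ i, ℓ (a i • w i)

/-- Two subspaces `V, W` of `(C, ℓ)` are orthogonal if
`ℓ (v + w) = max (ℓ v) (ℓ w)` for all `v ∈ V`, `w ∈ W` (Definition 2.8). -/
def AreOrthogonal {Λ : Type*} [Field Λ] {C : Type*} [AddCommGroup C] [Module Λ C]
    (ℓ : C → EReal) (V W : Submodule Λ C) : Prop :=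
  ∀ v ∈ V, ∀ w ∈ W, ℓ (v + w) = max (ℓ v) (ℓ w)

/-- An orthogonalizable `Λ`-space: a finite-dimensional non-Archimedean normed `Λ`-vector
space admitting an orthogonal (finite) basis. -/
def IsOrthogonalizable {Γ : AddSubgroup ℝ} {Λ : Type*} [Field Λ] (NS : NovikovStructure Γ Λ)
    {C : Type*} [AddCommGroup C] [Module Λ C] (ℓ : C → EReal) : Prop :=
  IsNonArchNorm NS ℓ ∧ ∃ (n : ℕ) (b : Module.Basis (Fin n) Λ C), IsOrthFamily Λ ℓ ⇑b

/-- A singular value decomposition (Definition 3.1) of a linear map `A : C → D` between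
orthogonalizable `Λ`-spaces: orthogonal ordered bases `(y₁,…,yₙ)` of `C` and `(x₁,…,xₘ)`
of `D` such that `(y_{r+1},…,yₙ)` is an orthogonal ordered basis of `ker A`,
`(x₁,…,x_r)` is an orthogonal ordered basis of `Im A`, `A yᵢ = xᵢ` for `i ≤ r`, and
`ℓ_C(y₁) - ℓ_D(x₁) ≥ … ≥ ℓ_C(y_r) - ℓ_D(x_r)`; here `r` is the rank of `A`. -/
def IsSVD {Λ : Type*} [Field Λ] {C D : Type*} [AddCommGroup C] [Module Λ C]
    [AddCommGroup D] [Module Λ D] (ℓC : C → EReal) (ℓD : D → EReal) (A : C →ₗ[Λ] D)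
    {r n m : ℕ} (hrn : r ≤ n) (hrm : r ≤ m)
    (y : Module.Basis (Fin n) Λ C) (x : Module.Basis (Fin m) Λ D) : Prop :=
  IsOrthFamily Λ ℓC ⇑y ∧
  IsOrthFamily Λ ℓD ⇑x ∧
  (∀ i : Fin r, A (y (Fin.castLE hrn i)) = x (Fin.castLE hrm i)) ∧
  (∀ i : Fin n, r ≤ (i : ℕ) → A (y i) = 0) ∧
  LinearMap.ker A = Submodule.span Λ (⇑y '' {i : Fin n | r ≤ (i : ℕ)}) ∧
  LinearMap.range A = Submodule.span Λ (⇑x '' {i : Fin m | (i : ℕ) < r}) ∧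
  (∀ i j : Fin r, i ≤ j →
    ℓC (y (Fin.castLE hrn j)) - ℓD (x (Fin.castLE hrm j)) ≤
      ℓC (y (Fin.castLE hrn i)) - ℓD (x (Fin.castLE hrm i)))

/-!
Gaussian elimination that keeps bases orthogonal. Write `A vⱼ = ∑ᵢ Mᵢⱼ wᵢ` in orthogonal bases
and take as pivot an entry maximizing `ℓ_D(Mᵢⱼ wᵢ) - ℓ_C(vⱼ)`. By the ultrametric inequality this
maximality is exactly what is needed to clear the rest of the pivot row, `vₖ ↦ vₖ - (Mᵢₖ/Mᵢⱼ) vⱼ`,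
and to replace `wᵢ` by `A vⱼ`, without losing orthogonality. The remaining vectors span subspaces
`C' ⊆ C`, `D' ⊆ D` with `A C' ⊆ D'`, to which the construction is applied again. The pairs
`(yₖ, A yₖ)` obtained this way are finally sorted by `ℓ_C(yₖ) - ℓ_D(A yₖ)`.
-/

namespace NovikovStructure

variable {Γ : AddSubgroup ℝ} {Λ : Type*} [Field Λ] (NS : NovikovStructure Γ Λ)

theorem exists_ν_eq_coe {a : Λ} (ha : a ≠ 0) : ∃ g : ℝ, NS.ν a = g :=
  let ⟨g, hg⟩ := NS.ν_mem a ha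
  ⟨g, hg⟩

theorem ν_one : NS.ν 1 = 0 := by
  obtain ⟨g, hg⟩ := NS.exists_ν_eq_coe one_ne_zero
  have h := NS.ν_mul 1 1
  rw [one_mul, hg, ← EReal.coe_add, EReal.coe_eq_coe_iff] at h
  rw [hg, show g = 0 by linarith, EReal.coe_zero]

theorem ν_neg_one : NS.ν (-1) = 0 := by
  obtain ⟨g, hg⟩ := NS.exists_ν_eq_coe (neg_ne_zero.2 one_ne_zero)
  have h := NS.ν_mul (-1) (-1)
  rw [neg_mul_neg, one_mul, ν_one, hg, ← EReal.coe_add, ← EReal.coe_zero,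
    EReal.coe_eq_coe_iff] at h
  rw [hg, show g = 0 by linarith, EReal.coe_zero]

end NovikovStructure

namespace IsNonArchNorm

variable {Γ : AddSubgroup ℝ} {Λ : Type*} [Field Λ] {NS : NovikovStructure Γ Λ}
  {C : Type*} [AddCommGroup C] [Module Λ C] {ℓ : C → EReal} (hl : IsNonArchNorm NS ℓ)
include hl

theorem map_zero : ℓ 0 = ⊥ := (hl.eq_bot_iff 0).2 rfl

theorem exists_eq_coe {x : C} (hx : x ≠ 0) : ∃ s : ℝ, ℓ x = s :=
  ⟨(ℓ x).toReal, (EReal.coe_toReal (hl.ne_top x) ((hl.eq_bot_iff x).not.2 hx)).symm⟩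

theorem map_neg (x : C) : ℓ (-x) = ℓ x := by
  rw [← neg_one_smul Λ x, hl.smul_eq, NS.ν_neg_one, sub_zero]

theorem sub_le (x y : C) : ℓ (x - y) ≤ max (ℓ x) (ℓ y) := by
  simpa only [sub_eq_add_neg, hl.map_neg] using hl.add_le x (-y)

theorem smul_le_smul {x y : C} (h : ℓ x ≤ ℓ y) (a : Λ) : ℓ (a • x) ≤ ℓ (a • y) := by
  rw [hl.smul_eq, hl.smul_eq]
  exact EReal.sub_le_sub h le_rfl

theorem sum_le {ι : Type*} {s : Finset ι} {f : ι → C} {M : EReal} (h : ∀ i ∈ s, ℓ (f i) ≤ M) :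
    ℓ (∑ i ∈ s, f i) ≤ M :=
  Finset.sum_induction f (fun z => ℓ z ≤ M)
    (fun _ _ ha hb => (hl.add_le _ _).trans (max_le ha hb)) (hl.map_zero ▸ bot_le) h

theorem max_add_eq_of_le {e : C} {M : EReal} (he : ℓ e ≤ M) (x : C) :
    max (ℓ (x + e)) M = max (ℓ x) M := by
  apply le_antisymm
  · exact max_le ((hl.add_le x e).trans (max_le_max le_rfl he)) (le_max_right _ _)
  · refine max_le ?_ (le_max_right _ _)
    calc ℓ x = ℓ (x + e - e) := by rw [add_sub_cancel_right]
      _ ≤ max (ℓ (x + e)) (ℓ e) := hl.sub_le _ _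
      _ ≤ max (ℓ (x + e)) M := max_le_max le_rfl he

end IsNonArchNorm

section Orthogonality

open Submodule

variable {Γ : AddSubgroup ℝ} {Λ : Type*} [Field Λ] {NS : NovikovStructure Γ Λ}
  {C : Type*} [AddCommGroup C] [Module Λ C] {ℓ : C → EReal}

theorem IsNonArchNorm.isOrthFamily_iff_le (hl : IsNonArchNorm NS ℓ) {ι : Type*} [Fintype ι]
    {w : ι → C} :
    IsOrthFamily Λ ℓ w ↔ ∀ (a : ι → Λ) (i : ι), ℓ (a i • w i) ≤ ℓ (∑ j, a j • w j) := by
  refine ⟨fun hw a i => (hw a).symm ▸ le_iSup (fun i => ℓ (a i • w i)) i, fun h a => ?_⟩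
  exact le_antisymm (hl.sum_le fun i _ => le_iSup (fun i => ℓ (a i • w i)) i) (iSup_le (h a))

theorem IsOrthFamily.comp_equiv {ι ι' : Type*} [Fintype ι] [Fintype ι'] {w : ι → C}
    (hw : IsOrthFamily Λ ℓ w) (e : ι' ≃ ι) : IsOrthFamily Λ ℓ (w ∘ e) := by
  intro a
  have h := hw (a ∘ e.symm)
  rw [← e.sum_comp, ← e.iSup_comp] at h
  simpa using h

theorem IsOrthFamily.linearIndependent (hl : IsNonArchNorm NS ℓ) {ι : Type*} [Fintype ι]
    {w : ι → C} (hw : IsOrthFamily Λ ℓ w) (hw0 : ∀ i, w i ≠ 0) : LinearIndependent Λ w := by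
  refine Fintype.linearIndependent_iff.2 fun a ha i => ?_
  have h := (hl.isOrthFamily_iff_le.1 hw) a i
  rw [ha, hl.map_zero, le_bot_iff, hl.eq_bot_iff] at h
  exact (smul_eq_zero.1 h).resolve_right (hw0 i)

theorem AreOrthogonal.mono {V V' W W' : Submodule Λ C} (h : AreOrthogonal ℓ V W) (hV : V' ≤ V)
    (hW : W' ≤ W) : AreOrthogonal ℓ V' W' :=
  fun v hv w hw => h v (hV hv) w (hW hw)

theorem IsNonArchNorm.isOrthFamily_cons_iff (hl : IsNonArchNorm NS ℓ) {n : ℕ} {x : C}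
    {f : Fin n → C} :
    IsOrthFamily Λ ℓ (Fin.cons x f : Fin (n + 1) → C) ↔
      IsOrthFamily Λ ℓ f ∧ AreOrthogonal ℓ (Λ ∙ x) (span Λ (Set.range f)) := by
  simp only [hl.isOrthFamily_iff_le, Fin.sum_univ_succ, Fin.forall_fin_succ, Fin.cons_zero,
    Fin.cons_succ]
  constructor
  · intro h
    have hf : ∀ (b : Fin n → Λ) k, ℓ (b k • f k) ≤ ℓ (∑ j, b j • f j) := fun b k => by
      simpa [hl.map_zero] using (h (Fin.cons 0 b)).2 k
    refine ⟨hf, ?_⟩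
    rintro _ hv _ hz
    obtain ⟨α, rfl⟩ := mem_span_singleton.1 hv
    obtain ⟨b, rfl⟩ := (mem_span_range_iff_exists_fun Λ).1 hz
    refine le_antisymm (hl.add_le _ _) (max_le ?_ (hl.sum_le fun k _ => ?_))
    · simpa using (h (Fin.cons α b)).1
    · simpa using (h (Fin.cons α b)).2 k
  · rintro ⟨hf, hx⟩ a
    rw [hx _ (smul_mem _ _ (mem_span_singleton_self x)) _
      ((mem_span_range_iff_exists_fun Λ).2 ⟨fun k => a k.succ, rfl⟩)]
    exact ⟨le_max_left _ _, fun k => (hf (fun k => a k.succ) k).trans (le_max_right _ _)⟩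

theorem IsOrthFamily.cons_of_span_le (hl : IsNonArchNorm NS ℓ) {n k : ℕ} {x : C} {f : Fin n → C}
    {g : Fin k → C} (h : IsOrthFamily Λ ℓ (Fin.cons x f : Fin (n + 1) → C))
    (hg : IsOrthFamily Λ ℓ g) (hgf : span Λ (Set.range g) ≤ span Λ (Set.range f)) :
    IsOrthFamily Λ ℓ (Fin.cons x g : Fin (k + 1) → C) :=
  hl.isOrthFamily_cons_iff.2 ⟨hg, (hl.isOrthFamily_cons_iff.1 h).2.mono le_rfl hgf⟩

theorem AreOrthogonal.map_sub_smul (hl : IsNonArchNorm NS ℓ) {x z : C} {V : Submodule Λ C}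
    (h : AreOrthogonal ℓ (Λ ∙ x) V) (hz : z ∈ V) {c : Λ} (hc : ℓ (c • x) ≤ ℓ z) :
    ℓ (z - c • x) = ℓ z := by
  rw [sub_eq_neg_add, h _ (neg_mem (smul_mem _ _ (mem_span_singleton_self x))) _ hz, hl.map_neg,
    max_eq_right hc]

theorem AreOrthogonal.add_of_le (hl : IsNonArchNorm NS ℓ) {x z : C} {V : Submodule Λ C}
    (h : AreOrthogonal ℓ (Λ ∙ x) V) (hz : z ∈ V) (hzx : ℓ z ≤ ℓ x) :
    AreOrthogonal ℓ (Λ ∙ (x + z)) V := by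
  rintro _ hv z' hz'
  obtain ⟨α, rfl⟩ := mem_span_singleton.1 hv
  have hαx : α • x ∈ Λ ∙ x := smul_mem _ α (mem_span_singleton_self x)
  have hαz : ℓ (α • z) ≤ ℓ (α • x) := hl.smul_le_smul hzx α
  rw [smul_add, h _ hαx _ (smul_mem _ α hz), max_eq_left hαz, add_assoc,
    h _ hαx _ (add_mem (smul_mem _ α hz) hz'), add_comm (α • z), max_comm,
    hl.max_add_eq_of_le hαz, max_comm]

theorem IsNonArchNorm.isOrthFamily_cons_sub_smul (hl : IsNonArchNorm NS ℓ) {n : ℕ} {x : C}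
    {f : Fin n → C} (h : IsOrthFamily Λ ℓ (Fin.cons x f : Fin (n + 1) → C)) {c : Fin n → Λ}
    (hc : ∀ k, ℓ (c k • x) ≤ ℓ (f k)) :
    IsOrthFamily Λ ℓ (Fin.cons x fun k => f k - c k • x : Fin (n + 1) → C) := by
  obtain ⟨hf, hx⟩ := hl.isOrthFamily_cons_iff.1 h
  have hf' := hl.isOrthFamily_iff_le.1 hf
  -- The new vectors only add to a combination of the `f k` a multiple of `x` dominated by it.
  have key : ∀ (α : Λ) (b : Fin n → Λ),
      ℓ (α • x + ∑ k, b k • (f k - c k • x)) = max (ℓ (α • x)) (ℓ (∑ k, b k • f k)) := by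
    intro α b
    set μ := ∑ k, b k * c k
    have hμ : ℓ ((-μ) • x) ≤ ℓ (∑ k, b k • f k) := by
      rw [neg_smul, hl.map_neg, Finset.sum_smul]
      exact hl.sum_le fun k _ => by
        rw [mul_smul]; exact (hl.smul_le_smul (hc k) (b k)).trans (hf' b k)
    calc ℓ (α • x + ∑ k, b k • (f k - c k • x)) = ℓ ((α - μ) • x + ∑ k, b k • f k) := by
          simp only [smul_sub, Finset.sum_sub_distrib, sub_smul, μ, Finset.sum_smul, mul_smul]
          abel_nf
      _ = max (ℓ (α • x + (-μ) • x)) (ℓ (∑ k, b k • f k)) := by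
          rw [hx _ (smul_mem _ _ (mem_span_singleton_self x)) _
            ((mem_span_range_iff_exists_fun Λ).2 ⟨b, rfl⟩), sub_eq_add_neg, add_smul]
      _ = max (ℓ (α • x)) (ℓ (∑ k, b k • f k)) := hl.max_add_eq_of_le hμ _
  have key0 : ∀ b : Fin n → Λ, ℓ (∑ k, b k • (f k - c k • x)) = ℓ (∑ k, b k • f k) := by
    intro b
    simpa [hl.map_zero] using key 0 b
  refine hl.isOrthFamily_cons_iff.2 ⟨hl.isOrthFamily_iff_le.2 fun b k => ?_, ?_⟩
  · rw [key0, smul_sub]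
    exact (hl.sub_le _ _).trans (max_le (hf' b k) ((hl.smul_le_smul (hc k) _).trans (hf' b k)))
  · rintro _ hv _ hz
    obtain ⟨α, rfl⟩ := mem_span_singleton.1 hv
    obtain ⟨b, rfl⟩ := (mem_span_range_iff_exists_fun Λ).1 hz
    rw [key, key0]

theorem IsNonArchNorm.isOrthFamily_cons_sum (hl : IsNonArchNorm NS ℓ) {m : ℕ}
    {w : Fin (m + 1) → C} (hw : IsOrthFamily Λ ℓ w) {d : Fin (m + 1) → Λ}
    (hd : ∀ i, ℓ (d i • w i) ≤ ℓ (d 0 • w 0)) :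
    IsOrthFamily Λ ℓ (Fin.cons (∑ i, d i • w i) (Fin.tail w) : Fin (m + 1) → C) := by
  rw [← Fin.cons_self_tail w, hl.isOrthFamily_cons_iff] at hw
  refine hl.isOrthFamily_cons_iff.2 ⟨hw.1, ?_⟩
  rw [Fin.sum_univ_succ]
  exact (hw.2.mono (span_singleton_smul_le Λ (d 0) (w 0)) le_rfl).add_of_le hl
    ((mem_span_range_iff_exists_fun Λ).2 ⟨fun i => d i.succ, rfl⟩) (hl.sum_le fun i _ => hd i.succ)

end Orthogonality

section UnsortedSVD

open Submodule

variable {Γ : AddSubgroup ℝ} {Λ : Type*} [Field Λ] {NS : NovikovStructure Γ Λ}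
  {C D : Type*} [AddCommGroup C] [Module Λ C] [AddCommGroup D] [Module Λ D]
  {ℓC : C → EReal} {ℓD : D → EReal}

theorem smul_le_of_sub_le (hlC : IsNonArchNorm NS ℓC) (hlD : IsNonArchNorm NS ℓD) {t : Λ}
    {z : D} {x x' : C} (hz : z ≠ 0) (hx : x ≠ 0) (hx' : x' ≠ 0)
    (h : ℓD (t • z) - ℓC x' ≤ ℓD z - ℓC x) : ℓC (t • x) ≤ ℓC x' := by
  rcases eq_or_ne t 0 with rfl | ht
  · rw [zero_smul, hlC.map_zero]
    exact bot_le
  obtain ⟨a, ha⟩ := hlD.exists_eq_coe hz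
  obtain ⟨b, hb⟩ := hlC.exists_eq_coe hx
  obtain ⟨b', hb'⟩ := hlC.exists_eq_coe hx'
  obtain ⟨g, hg⟩ := NS.exists_ν_eq_coe ht
  rw [hlD.smul_eq, ha, hb', hg, hb] at h
  rw [hlC.smul_eq, hb, hb', hg]
  have h' : a - g - b' ≤ a - b := by exact_mod_cast h
  exact_mod_cast (by linarith : b - g ≤ b')

/-- `IsSVD` without the ordering, for families that need not span: the kernel and range clauses
follow once `y` and `x` are bases (`ker_eq_span_of_map`, `range_eq_span_of_map`). -/
structure IsUnsortedSVD (ℓC : C → EReal) (ℓD : D → EReal) (A : C →ₗ[Λ] D) {r n m : ℕ}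
    (hrn : r ≤ n) (hrm : r ≤ m) (y : Fin n → C) (x : Fin m → D) : Prop where
  orth_left : IsOrthFamily Λ ℓC y
  orth_right : IsOrthFamily Λ ℓD x
  ne_zero_left : ∀ j, y j ≠ 0
  ne_zero_right : ∀ i, x i ≠ 0
  map_castLE : ∀ i : Fin r, A (y (Fin.castLE hrn i)) = x (Fin.castLE hrm i)
  map_of_le : ∀ i : Fin n, r ≤ (i : ℕ) → A (y i) = 0

theorem isUnsortedSVD_zero {A : C →ₗ[Λ] D} {n m : ℕ} {v : Fin n → C} {w : Fin m → D}
    (hv : IsOrthFamily Λ ℓC v) (hw : IsOrthFamily Λ ℓD w) (hv0 : ∀ j, v j ≠ 0)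
    (hw0 : ∀ i, w i ≠ 0) (hA : ∀ j, A (v j) = 0) :
    IsUnsortedSVD ℓC ℓD A (Nat.zero_le n) (Nat.zero_le m) v w :=
  ⟨hv, hw, hv0, hw0, fun i => i.elim0, fun j _ => hA j⟩

theorem IsUnsortedSVD.cons (hlC : IsNonArchNorm NS ℓC) (hlD : IsNonArchNorm NS ℓD)
    {A : C →ₗ[Λ] D} {r n m k l : ℕ} {hrn : r ≤ n} {hrm : r ≤ m} {y : Fin n → C} {x : Fin m → D}
    (h : IsUnsortedSVD ℓC ℓD A hrn hrm y x) {y₀ : C} {x₀ : D} {f : Fin k → C} {g : Fin l → D}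
    (hf : IsOrthFamily Λ ℓC (Fin.cons y₀ f : Fin (k + 1) → C))
    (hg : IsOrthFamily Λ ℓD (Fin.cons x₀ g : Fin (l + 1) → D))
    (hyf : span Λ (Set.range y) ≤ span Λ (Set.range f))
    (hxg : span Λ (Set.range x) ≤ span Λ (Set.range g)) (hy₀ : y₀ ≠ 0) (hx₀ : x₀ ≠ 0)
    (hA : A y₀ = x₀) :
    IsUnsortedSVD ℓC ℓD A (Nat.succ_le_succ hrn) (Nat.succ_le_succ hrm)
      (Fin.cons y₀ y : Fin (n + 1) → C) (Fin.cons x₀ x : Fin (m + 1) → D) where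
  orth_left := hf.cons_of_span_le hlC h.orth_left hyf
  orth_right := hg.cons_of_span_le hlD h.orth_right hxg
  ne_zero_left := Fin.cases hy₀ h.ne_zero_left
  ne_zero_right := Fin.cases hx₀ h.ne_zero_right
  map_castLE := Fin.cases hA fun i => by simpa [Fin.castLE_succ] using h.map_castLE i
  map_of_le := Fin.cases (fun h0 => absurd h0 (by simp)) fun i hi => by
    simpa using h.map_of_le i (by simpa using hi)

theorem exists_pivot_reduction (hlC : IsNonArchNorm NS ℓC) (hlD : IsNonArchNorm NS ℓD)
    (A : C →ₗ[Λ] D) {n m : ℕ} {v : Fin (n + 1) → C} {w : Fin (m + 1) → D}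
    (hv : IsOrthFamily Λ ℓC v) (hw : IsOrthFamily Λ ℓD w) (hv0 : ∀ j, v j ≠ 0)
    (hw0 : ∀ i, w i ≠ 0) {M : Fin (n + 1) → Fin (m + 1) → Λ}
    (hM : ∀ j, ∑ i, M j i • w i = A (v j)) (hM0 : M 0 0 ≠ 0)
    (hmax : ∀ j i, M j i ≠ 0 → ℓD (M j i • w i) - ℓC (v j) ≤ ℓD (M 0 0 • w 0) - ℓC (v 0)) :
    ∃ y : Fin n → C, IsOrthFamily Λ ℓC (Fin.cons (v 0) y : Fin (n + 1) → C) ∧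
      (∀ k, y k ≠ 0) ∧ span Λ (Set.range y) ≤ span Λ (Set.range v) ∧
      (∀ k, A (y k) ∈ span Λ (Set.range (Fin.tail w))) ∧
      IsOrthFamily Λ ℓD (Fin.cons (A (v 0)) (Fin.tail w) : Fin (m + 1) → D) ∧ A (v 0) ≠ 0 := by
  set t : Fin n → Λ := fun k => M k.succ 0 / M 0 0
  have hdomC : ∀ k, ℓC (t k • v 0) ≤ ℓC (v k.succ) := by
    intro k
    by_cases hk : M k.succ 0 = 0
    · simp [t, hk, hlC.map_zero]
    refine smul_le_of_sub_le hlC hlD (smul_ne_zero hM0 (hw0 0)) (hv0 0) (hv0 _) ?_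
    rw [smul_smul, div_mul_cancel₀ _ hM0]
    exact hmax _ 0 hk
  have hdomD : ∀ i, ℓD (M 0 i • w i) ≤ ℓD (M 0 0 • w 0) := by
    intro i
    by_cases hi : M 0 i = 0
    · simp [hi, hlD.map_zero]
    obtain ⟨s, hs⟩ := hlC.exists_eq_coe (hv0 0)
    have h := add_le_add_left (hmax 0 i hi) (s : EReal)
    rwa [hs, EReal.sub_add_cancel, EReal.sub_add_cancel] at h
  have hv' : IsOrthFamily Λ ℓC (Fin.cons (v 0) (Fin.tail v) : Fin (n + 1) → C) := by
    rwa [Fin.cons_self_tail]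
  refine ⟨fun k => v k.succ - t k • v 0, hlC.isOrthFamily_cons_sub_smul hv' hdomC, fun k h0 => ?_,
    span_le.2 (Set.range_subset_iff.2 fun k => sub_mem (subset_span ⟨k.succ, rfl⟩)
      (smul_mem _ _ (subset_span ⟨0, rfl⟩))), fun k => ?_, ?_, ?_⟩
  · have h := (hlC.isOrthFamily_cons_iff.1 hv').2.map_sub_smul hlC (subset_span ⟨k, rfl⟩) (hdomC k)
    rw [show Fin.tail v k - t k • v 0 = 0 from h0, hlC.map_zero, eq_comm, hlC.eq_bot_iff] at h
    exact hv0 k.succ h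
  · refine (mem_span_range_iff_exists_fun Λ).2 ⟨fun i => M k.succ i.succ - t k * M 0 i.succ, ?_⟩
    rw [map_sub, map_smul, ← hM, ← hM, Finset.smul_sum, ← Finset.sum_sub_distrib, Fin.sum_univ_succ]
    simp [t, Fin.tail, smul_smul, sub_smul, div_mul_cancel₀ _ hM0]
  · rw [← hM 0]
    exact hlD.isOrthFamily_cons_sum hw hdomD
  · intro h0
    have h := (hlD.isOrthFamily_iff_le.1 hw) (M 0) 0
    rw [hM 0, h0, hlD.map_zero, le_bot_iff, hlD.eq_bot_iff] at h
    exact smul_ne_zero hM0 (hw0 0) h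

theorem exists_isUnsortedSVD (hlC : IsNonArchNorm NS ℓC) (hlD : IsNonArchNorm NS ℓD)
    (A : C →ₗ[Λ] D) {n m : ℕ} {v : Fin n → C} {w : Fin m → D} (hv : IsOrthFamily Λ ℓC v)
    (hw : IsOrthFamily Λ ℓD w) (hv0 : ∀ j, v j ≠ 0) (hw0 : ∀ i, w i ≠ 0)
    (hAv : ∀ j, A (v j) ∈ span Λ (Set.range w)) :
    ∃ (r : ℕ) (hrn : r ≤ n) (hrm : r ≤ m) (y : Fin n → C) (x : Fin m → D),
      IsUnsortedSVD ℓC ℓD A hrn hrm y x ∧ span Λ (Set.range y) ≤ span Λ (Set.range v) ∧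
        span Λ (Set.range x) ≤ span Λ (Set.range w) := by
  classical
  induction n generalizing m with
  | zero => exact ⟨0, le_rfl, Nat.zero_le m, v, w,
      isUnsortedSVD_zero hv hw hv0 hw0 finZeroElim, le_rfl, le_rfl⟩
  | succ n ih =>
    choose M hM using fun j => (mem_span_range_iff_exists_fun Λ).1 (hAv j)
    by_cases hM0 : ∀ j i, M j i = 0
    · refine ⟨0, Nat.zero_le _, Nat.zero_le m, v, w,
        isUnsortedSVD_zero hv hw hv0 hw0 fun j => ?_, le_rfl, le_rfl⟩
      simp [← hM j, hM0]
    simp only [not_forall] at hM0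
    obtain ⟨j₁, i₁, hM₁⟩ := hM0
    obtain ⟨⟨j₀, i₀⟩, hp₀, hmax⟩ := Finset.exists_max_image
      (Finset.univ.filter fun p : Fin (n + 1) × Fin m => M p.1 p.2 ≠ 0)
      (fun p => ℓD (M p.1 p.2 • w p.2) - ℓC (v p.1)) ⟨(j₁, i₁), by simpa using hM₁⟩
    cases m with
    | zero => exact i₀.elim0
    | succ m =>
    set σ := Equiv.swap 0 j₀
    set τ := Equiv.swap 0 i₀
    obtain ⟨y, hy, hy0, hyv, hAy, hx, hx0⟩ := exists_pivot_reduction hlC hlD A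
      (hv.comp_equiv σ) (hw.comp_equiv τ) (fun j => hv0 _) (fun i => hw0 _)
      (M := fun j i => M (σ j) (τ i)) (fun j => (Equiv.sum_comp τ fun i => M (σ j) i • w i).trans (hM _))
      (by simpa [σ, τ] using hp₀)
      (fun j i hji => by simpa [σ, τ] using hmax (σ j, τ i) (by simpa using hji))
    obtain ⟨r, hrn, hrm, y', x', h', hy'y, hx'x⟩ := ih (hlC.isOrthFamily_cons_iff.1 hy).1
      (hlD.isOrthFamily_cons_iff.1 hx).1 hy0 (fun i => hw0 _) hAy
    refine ⟨r + 1, _, _, _, _, h'.cons hlC hlD hy hx hy'y hx'x (hv0 _) hx0 rfl, ?_, ?_⟩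
    · rw [Fin.range_cons, span_insert, ← EquivLike.range_comp v σ]
      exact sup_le (span_singleton_le_iff_mem _ _ |>.2 (subset_span ⟨0, rfl⟩)) (hy'y.trans hyv)
    · rw [Fin.range_cons, span_insert]
      refine sup_le (span_singleton_le_iff_mem _ _ |>.2 (hAv _)) (hx'x.trans (span_mono ?_))
      rintro _ ⟨i, rfl⟩
      exact ⟨_, rfl⟩

end UnsortedSVD

section Assembly

open Submodule

variable {Γ : AddSubgroup ℝ} {Λ : Type*} [Field Λ] {NS : NovikovStructure Γ Λ}
  {C D : Type*} [AddCommGroup C] [Module Λ C] [AddCommGroup D] [Module Λ D]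
  {ℓC : C → EReal} {ℓD : D → EReal}

theorem IsUnsortedSVD.exists_antitone {A : C →ₗ[Λ] D} {r n m : ℕ} {hrn : r ≤ n}
    {hrm : r ≤ m} {y : Fin n → C} {x : Fin m → D} (h : IsUnsortedSVD ℓC ℓD A hrn hrm y x) :
    ∃ (y' : Fin n → C) (x' : Fin m → D), IsUnsortedSVD ℓC ℓD A hrn hrm y' x' ∧
      Antitone fun i => ℓC (y' (Fin.castLE hrn i)) - ℓD (x' (Fin.castLE hrm i)) := by
  set s : Fin r → EReal := fun i => ℓC (y (Fin.castLE hrn i)) - ℓD (x (Fin.castLE hrm i))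
  set π := Tuple.sort (OrderDual.toDual ∘ s)
  have hext : ∀ {k : ℕ} (hk : r ≤ k) (i : Fin r),
      π.extendDomain (Fin.castLEquiv hk) (Fin.castLE hk i) = Fin.castLE hk (π i) :=
    fun hk i => by simpa using π.extendDomain_apply_image (Fin.castLEquiv hk) i
  have hfix : ∀ {k : ℕ} (hk : r ≤ k) (i : Fin k), r ≤ (i : ℕ) →
      π.extendDomain (Fin.castLEquiv hk) i = i :=
    fun hk i hi => π.extendDomain_apply_not_subtype _ (not_lt.2 hi)
  refine ⟨y ∘ π.extendDomain (Fin.castLEquiv hrn), x ∘ π.extendDomain (Fin.castLEquiv hrm),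
    ⟨h.orth_left.comp_equiv _, h.orth_right.comp_equiv _, fun j => h.ne_zero_left _,
      fun i => h.ne_zero_right _, fun i => ?_, fun i hi => ?_⟩, ?_⟩
  · simpa only [Function.comp_apply, hext] using h.map_castLE (π i)
  · simpa only [Function.comp_apply, hfix hrn i hi] using h.map_of_le i hi
  · simp only [Function.comp_apply, hext]
    exact monotone_toDual_comp_iff.1 (Tuple.monotone_sort (OrderDual.toDual ∘ s))

theorem exists_basis_coe_eq_of_linearIndependent {K V : Type*} [Field K] [AddCommGroup V]
    [Module K V] {n : ℕ} (b : Module.Basis (Fin n) K V) {y : Fin n → V}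
    (hy : LinearIndependent K y) : ∃ y' : Module.Basis (Fin n) K V, ⇑y' = y :=
  haveI := Module.Finite.of_basis b
  ⟨basisOfLinearIndependentOfCardEqFinrank' y hy (by simp [Module.finrank_eq_card_basis b]),
    coe_basisOfLinearIndependentOfCardEqFinrank' y hy _⟩

variable {A : C →ₗ[Λ] D} {r n m : ℕ} {hrn : r ≤ n} {hrm : r ≤ m} (y : Module.Basis (Fin n) Λ C)
  (x : Module.Basis (Fin m) Λ D)
  (hmap : ∀ i : Fin r, A (y (Fin.castLE hrn i)) = x (Fin.castLE hrm i))
  (hker : ∀ i : Fin n, r ≤ (i : ℕ) → A (y i) = 0)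
include hmap hker

theorem repr_map_castLE (z : C) (i : Fin r) :
    x.repr (A z) (Fin.castLE hrm i) = y.repr z (Fin.castLE hrn i) := by
  suffices (x.coord (Fin.castLE hrm i)).comp A = y.coord (Fin.castLE hrn i) from
    LinearMap.congr_fun this z
  refine y.ext fun j => ?_
  by_cases hj : (j : ℕ) < r
  · obtain ⟨k, rfl⟩ : ∃ k : Fin r, Fin.castLE hrn k = j := ⟨⟨j, hj⟩, rfl⟩
    simp [hmap, Finsupp.single_apply, Fin.castLE_inj]
  · have hji : j ≠ Fin.castLE hrn i := fun h => hj (h ▸ i.isLt)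
    simp [hker j (not_lt.1 hj), hji]

theorem ker_eq_span_of_map : LinearMap.ker A = span Λ (y '' {i | r ≤ (i : ℕ)}) := by
  refine le_antisymm (fun z hz => y.mem_span_image.2 fun i hi => ?_) (span_le.2 ?_)
  · by_contra hir
    have h := repr_map_castLE y x hmap hker z ⟨i, not_le.1 hir⟩
    rw [LinearMap.mem_ker.1 hz] at h
    exact Finsupp.mem_support_iff.1 hi (by simpa using h.symm)
  · rintro _ ⟨i, hi, rfl⟩
    exact hker i hi

theorem range_eq_span_of_map : LinearMap.range A = span Λ (x '' {i | (i : ℕ) < r}) := by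
  refine le_antisymm ?_ (span_le.2 ?_)
  · rw [LinearMap.range_eq_map, ← y.span_eq, map_span, span_le]
    rintro _ ⟨_, ⟨j, rfl⟩, rfl⟩
    by_cases hj : (j : ℕ) < r
    · obtain ⟨k, rfl⟩ : ∃ k : Fin r, Fin.castLE hrn k = j := ⟨⟨j, hj⟩, rfl⟩
      rw [hmap]
      exact subset_span ⟨_, k.isLt, rfl⟩
    · rw [hker j (not_lt.1 hj)]
      exact zero_mem _
  · rintro _ ⟨i, hi, rfl⟩
    obtain ⟨k, rfl⟩ : ∃ k : Fin r, Fin.castLE hrm k = i := ⟨⟨i, hi⟩, rfl⟩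
    exact hmap k ▸ LinearMap.mem_range_self A _

end Assembly

/-- Theorem 3.3: every `Λ`-linear map between orthogonalizable
`Λ`-spaces admits a singular value decomposition. -/
theorem exists_singular_value_decomposition
    {Γ : AddSubgroup ℝ} {Λ : Type*} [Field Λ] (NS : NovikovStructure Γ Λ)
    {C D : Type*} [AddCommGroup C] [Module Λ C] [AddCommGroup D] [Module Λ D]
    {ℓC : C → EReal} {ℓD : D → EReal}
    (hC : IsOrthogonalizable NS ℓC) (hD : IsOrthogonalizable NS ℓD)
    (A : C →ₗ[Λ] D) :
    ∃ (r n m : ℕ) (hrn : r ≤ n) (hrm : r ≤ m)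
      (y : Module.Basis (Fin n) Λ C) (x : Module.Basis (Fin m) Λ D),
      IsSVD ℓC ℓD A hrn hrm y x := by
  obtain ⟨hlC, n, bC, hbC⟩ := hC
  obtain ⟨hlD, m, bD, hbD⟩ := hD
  obtain ⟨r, hrn, hrm, y, x, h, -, -⟩ := exists_isUnsortedSVD hlC hlD A hbC hbD bC.ne_zero
    bD.ne_zero fun j => by simp [bD.span_eq]
  obtain ⟨y, x, h, hsorted⟩ := h.exists_antitone
  obtain ⟨y, rfl⟩ := exists_basis_coe_eq_of_linearIndependent bC
    (h.orth_left.linearIndependent hlC h.ne_zero_left)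
  obtain ⟨x, rfl⟩ := exists_basis_coe_eq_of_linearIndependent bD
    (h.orth_right.linearIndependent hlD h.ne_zero_right)
  exact ⟨r, n, m, hrn, hrm, y, x, h.orth_left, h.orth_right, h.map_castLE, h.map_of_le,
    ker_eq_span_of_map y x h.map_castLE h.map_of_le,
    range_eq_span_of_map y x h.map_castLE h.map_of_le, hsorted⟩
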